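/- arXiv:math-ph/0505001 — 2 statements merged into one kernel-verified Lean document; each statement's English description precedes it below -/
import Mathlib

section
/- Let (X(N))_{N≥1} be a superadditive real sequence, i.e. X(M+N) ≥ X(M) + X(N) for all M,N. Then lim_{N→∞} X(N)/N = lim_{N→∞} liminf_{M→∞} (X(M+N) − X(M))/N, where both limits exist in ℝ ∪ {+∞}. -/
open Filter Set Topology

/-- Fekete core: for a superadditive sequence, `X n / n ≤ liminf X m / m` in `EReal`. -/
lemma fekete_core (X : ℕ → ℝ) (hsuper : ∀ M N, 1 ≤ M → 1 ≤ N → X M + X N ≤ X (M + N))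
    {n : ℕ} (hn : 1 ≤ n) :
    ((X n / n : ℝ) : EReal) ≤ liminf (fun m : ℕ => ((X m / m : ℝ) : EReal)) atTop := by
  set C : ℝ := X n / n with hC
  set u : ℕ → ℝ := fun m => if m = 0 then 0 else max (-X m) (-(C * m)) with hu
  have hu0 : u 0 = 0 := by simp [hu]
  have hupos : ∀ m : ℕ, 1 ≤ m → u m = max (-X m) (-(C * m)) := by
    intro m hm; simp [hu, Nat.one_le_iff_ne_zero.mp hm]
  have hsub : Subadditive u := by
    intro a b
    rcases Nat.eq_zero_or_pos a with ha | ha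
    · simp [ha, hu0]
    rcases Nat.eq_zero_or_pos b with hb | hb
    · simp [hb, hu0]
    rw [hupos a ha, hupos b hb, hupos (a + b) (by omega)]
    apply max_le
    · have h1 := hsuper a b ha hb
      have : -X (a + b) ≤ -X a + -X b := by linarith
      exact this.trans (add_le_add (le_max_left _ _) (le_max_left _ _))
    · have : -(C * ((a : ℝ) + b)) = -(C * a) + -(C * b) := by ring
      rw [Nat.cast_add, this]
      exact add_le_add (le_max_right _ _) (le_max_right _ _)
  have hbdd : BddBelow (range fun k : ℕ => u k / k) := by
    refine ⟨-|C|, ?_⟩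
    rintro x ⟨k, rfl⟩
    rcases Nat.eq_zero_or_pos k with hk | hk
    · simp [hk, hu0, abs_nonneg]
    · have hkpos : (0 : ℝ) < k := by exact_mod_cast hk
      have h1 : -(C * k) ≤ u k := by rw [hupos k hk]; exact le_max_right _ _
      have : -C ≤ u k / k := by
        rw [le_div_iff₀ hkpos]; linarith
      exact (neg_le_neg (le_abs_self C)).trans this
  have hCn : C * n = X n := by
    rw [hC]; field_simp
  have hun : u n / n = -C := by
    rw [hupos n hn, hCn]
    have : max (-X n) (-X n) = -X n := max_self _
    rw [this, hC, neg_div]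
  have hlim : hsub.lim = -C := by
    rw [Subadditive.lim]
    apply IsLeast.csInf_eq
    constructor
    · exact ⟨n, hn, hun⟩
    · rintro x ⟨k, hk, rfl⟩
      have hk1 : 1 ≤ k := hk
      have hkpos : (0 : ℝ) < k := by exact_mod_cast hk1
      have h1 : -(C * k) ≤ u k := by rw [hupos k hk1]; exact le_max_right _ _
      rw [le_div_iff₀ hkpos]; linarith
  have htend : Tendsto (fun k : ℕ => -(u k / k)) atTop (𝓝 C) := by
    have := hsub.tendsto_lim hbdd
    rw [hlim] at this
    simpa using this.neg
  have htendE : Tendsto (fun k : ℕ => ((-(u k / k) : ℝ) : EReal)) atTop (𝓝 (C : EReal)) :=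
    EReal.tendsto_coe.mpr htend
  have hliminf_eq : liminf (fun k : ℕ => ((-(u k / k) : ℝ) : EReal)) atTop = (C : EReal) :=
    htendE.liminf_eq
  rw [← hliminf_eq]
  refine liminf_le_liminf ?_
  filter_upwards [eventually_ge_atTop 1] with k hk
  have hkpos : (0 : ℝ) < k := by exact_mod_cast hk
  have h1 : -X k ≤ u k := by rw [hupos k hk]; exact le_max_left _ _
  have : -(u k / k) ≤ X k / k := by
    rw [neg_le, ← neg_div]
    exact div_le_div_of_nonneg_right h1 hkpos.le
  exact_mod_cast EReal.coe_le_coe_iff.mpr this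

/-- For a superadditive real sequence `X`, the limit of `X N / N`
and the limit in `N` of `liminf_M (X(M+N) − X(M))/N` both exist in `ℝ ∪ {+∞}` (i.e. in
`EReal`, and they are never `−∞`), and they are equal. -/
theorem superadditive_limit_eq_liminf_increment
    (X : ℕ → ℝ) (hsuper : ∀ M N, 1 ≤ M → 1 ≤ N → X M + X N ≤ X (M + N)) :
    ∃ L : EReal, L ≠ ⊥ ∧
      Tendsto (fun N : ℕ => ((X N / N : ℝ) : EReal)) atTop (nhds L) ∧
      Tendsto (fun N : ℕ =>
          Filter.liminf (fun M : ℕ => (((X (M + N) - X M) / N : ℝ) : EReal)) atTop)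
        atTop (nhds L) := by
  have hcore : ∀ n : ℕ, 1 ≤ n →
      ((X n / n : ℝ) : EReal) ≤ liminf (fun m : ℕ => ((X m / m : ℝ) : EReal)) atTop :=
    fun n hn => fekete_core X hsuper hn
  set L : EReal := liminf (fun m : ℕ => ((X m / m : ℝ) : EReal)) atTop with hLdef
  have hlimsup : limsup (fun m : ℕ => ((X m / m : ℝ) : EReal)) atTop = L := by
    apply le_antisymm
    · refine limsup_le_of_le (by isBoundedDefault) ?_
      filter_upwards [eventually_ge_atTop 1] with m hm
      exact hcore m hm
    · exact liminf_le_limsup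
  have htendf : Tendsto (fun m : ℕ => ((X m / m : ℝ) : EReal)) atTop (𝓝 L) :=
    tendsto_of_liminf_eq_limsup rfl hlimsup
  have hLbot : L ≠ ⊥ := by
    intro h
    have h1 := hcore 1 le_rfl
    rw [h] at h1
    exact (EReal.bot_lt_coe _).not_ge h1
  refine ⟨L, hLbot, htendf, ?_⟩
  -- lower bound on the increment liminf
  have hlow : ∀ N : ℕ, 1 ≤ N →
      ((X N / N : ℝ) : EReal) ≤
        liminf (fun M : ℕ => (((X (M + N) - X M) / N : ℝ) : EReal)) atTop := by
    intro N hN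
    refine le_liminf_of_le ?_ ?_
    · exact isCobounded_ge_of_top
    · filter_upwards [eventually_ge_atTop 1] with M hM
      have h1 := hsuper M N hM hN
      have hNpos : (0 : ℝ) < N := by exact_mod_cast hN
      have : X N / N ≤ (X (M + N) - X M) / N := by
        apply div_le_div_of_nonneg_right ?_ hNpos.le
        · linarith
      exact_mod_cast EReal.coe_le_coe_iff.mpr this
  -- upper bound on the increment liminf
  have hupp : ∀ N : ℕ, 1 ≤ N →
      liminf (fun M : ℕ => (((X (M + N) - X M) / N : ℝ) : EReal)) atTop ≤ L := by
    intro N hN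
    by_contra hcon
    push_neg at hcon
    have hLtop : L ≠ ⊤ := (hcon.trans_le le_top).ne
    obtain ⟨c, hc1, hc2⟩ := EReal.exists_between_coe_real hcon
    set ℓ : ℝ := L.toReal with hldef
    have hLeq : L = (ℓ : EReal) := (EReal.coe_toReal hLtop hLbot).symm
    have hreal : Tendsto (fun m : ℕ => X m / m) atTop (𝓝 ℓ) := by
      rw [hLeq] at htendf
      exact EReal.tendsto_coe.mp htendf
    have hlc : ℓ < c := by
      rw [hLeq] at hc1
      exact_mod_cast hc1
    have hNpos : (0 : ℝ) < N := by exact_mod_cast hN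
    -- eventually the increments exceed c * N
    have hev : ∀ᶠ M in atTop, (c : EReal) < (((X (M + N) - X M) / N : ℝ) : EReal) :=
      eventually_lt_of_lt_liminf hc2
    obtain ⟨M₀, hM₀⟩ := eventually_atTop.mp hev
    set M₁ : ℕ := max M₀ 1 with hM₁def
    have hM₁pos : 1 ≤ M₁ := le_max_right _ _
    have hstep : ∀ M : ℕ, M₁ ≤ M → c * N < X (M + N) - X M := by
      intro M hM
      have := hM₀ M (le_trans (le_max_left _ _) hM)
      have hr : c < (X (M + N) - X M) / N := by exact_mod_cast this
      exact (lt_div_iff₀ hNpos).mp hr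
    have key : ∀ k : ℕ, X M₁ + k * (c * N) ≤ X (M₁ + k * N) := by
      intro k
      induction k with
      | zero => simp
      | succ k IH =>
        have h1 : M₁ + (k + 1) * N = (M₁ + k * N) + N := by ring
        have h2 := hstep (M₁ + k * N) (Nat.le_add_right _ _)
        rw [h1]
        push_cast
        push_cast at IH
        linarith
    -- the subsequence M₁ + k*N tends to infinity
    have hsubseq : Tendsto (fun k : ℕ => M₁ + k * N) atTop atTop := by
      apply tendsto_atTop_mono (fun k => ?_) tendsto_id
      calc (k : ℕ) = k * 1 := (Nat.mul_one k).symm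
        _ ≤ k * N := Nat.mul_le_mul_left k hN
        _ ≤ M₁ + k * N := Nat.le_add_left _ _
    have h1 : Tendsto (fun k : ℕ => X (M₁ + k * N) / ((M₁ + k * N : ℕ) : ℝ)) atTop (𝓝 ℓ) :=
      hreal.comp hsubseq
    have hdenpos : ∀ k : ℕ, (0 : ℝ) < (M₁ : ℝ) + k * N := by
      intro k
      have : (1 : ℝ) ≤ (M₁ : ℝ) := by exact_mod_cast hM₁pos
      have : (0 : ℝ) ≤ (k : ℝ) * N := by positivity
      linarith
    have hdentend : Tendsto (fun k : ℕ => (M₁ : ℝ) + k * N) atTop atTop := by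
      apply tendsto_atTop_add_const_left
      exact Tendsto.atTop_mul_const hNpos tendsto_natCast_atTop_atTop
    have h2 : Tendsto (fun k : ℕ => (X M₁ + k * (c * N)) / ((M₁ : ℝ) + k * N)) atTop (𝓝 c) := by
      have hform : ∀ k : ℕ, (X M₁ + k * (c * N)) / ((M₁ : ℝ) + k * N)
          = (X M₁ - c * M₁) / ((M₁ : ℝ) + k * N) + c := by
        intro k
        have hd := (hdenpos k).ne'
        field_simp
        ring
      have hz : Tendsto (fun k : ℕ => (X M₁ - c * M₁) / ((M₁ : ℝ) + k * N)) atTop (𝓝 0) :=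
        Tendsto.div_atTop tendsto_const_nhds hdentend
      have := hz.add (tendsto_const_nhds (x := c))
      rw [zero_add] at this
      exact this.congr (fun k => (hform k).symm)
    have hcmp : ∀ k : ℕ, (X M₁ + k * (c * N)) / ((M₁ : ℝ) + k * N)
        ≤ X (M₁ + k * N) / ((M₁ + k * N : ℕ) : ℝ) := by
      intro k
      have hcast : ((M₁ + k * N : ℕ) : ℝ) = (M₁ : ℝ) + k * N := by push_cast; ring
      rw [hcast]
      exact div_le_div_of_nonneg_right (key k) (hdenpos k).le
    have : c ≤ ℓ := le_of_tendsto_of_tendsto h2 h1 (Eventually.of_forall hcmp)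
    linarith
  -- squeeze
  refine tendsto_of_tendsto_of_tendsto_of_le_of_le' htendf tendsto_const_nhds ?_ ?_
  · filter_upwards [eventually_ge_atTop 1] with N hN
    exact hlow N hN
  · filter_upwards [eventually_ge_atTop 1] with N hN
    exact hupp N hN
end

section
/- Let Ω be a compact metric space, α a Borel probability measure on Ω, φ : Ω^n → ℝ bounded measurable and symmetric, and suppose Φ(μ) := μ^{⊗n}(φ) is convex on probability measures. Define Z̃(N) = ∫_{Ω^N} exp(−N·Φ(μ_x)) dα^{⊗N}(x), where μ_x is the empirical measure of x. Then Z̃(M+N) ≥ Z̃(M)·Z̃(N) for all M, N ≥ 1; equivalently, the sequence N·p̃(N) with p̃(N) = N^{-1} log Z̃(N) is superadditive. -/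
/-!
Concatenating `x ∈ Ω^M` and `y ∈ Ω^N` gives an empirical measure that is the convex combination
`M/(M+N) • μ_x + N/(M+N) • μ_y`, so convexity of `Φ` makes the energy `N Φ(μ_x)` subadditive under
concatenation. Exponentiating, the integrand of `Z̃(M+N)` at `(x, y)` dominates the product of the
integrands of `Z̃(M)` at `x` and `Z̃(N)` at `y`; since concatenation carries `α^{⊗M} ⊗ α^{⊗N}` to
`α^{⊗(M+N)}`, Fubini turns this pointwise bound into `Z̃(M) Z̃(N) ≤ Z̃(M+N)`.
-/

open MeasureTheory
open scoped ENNReal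

namespace MeasurableEquiv

variable {Ω : Type*} [MeasurableSpace Ω]

noncomputable def finAppend (M N : ℕ) : (Fin M → Ω) × (Fin N → Ω) ≃ᵐ (Fin (M + N) → Ω) :=
  (sumPiEquivProdPi fun _ => Ω).symm.trans (piCongrLeft (fun _ => Ω) finSumFinEquiv)

theorem finAppend_apply {M N : ℕ} (p : (Fin M → Ω) × (Fin N → Ω)) :
    finAppend M N p = Fin.append p.1 p.2 := by
  funext k
  obtain ⟨s, rfl⟩ := finSumFinEquiv.surjective k
  rw [finAppend, trans_apply, piCongrLeft_apply_apply]
  cases s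
  · rw [finSumFinEquiv_apply_left, Fin.append_left]; rfl
  · rw [finSumFinEquiv_apply_right, Fin.append_right]; rfl

theorem measurePreserving_finAppend (α : Measure Ω) [SigmaFinite α] (M N : ℕ) :
    MeasurePreserving (finAppend M N)
      ((Measure.pi fun _ : Fin M => α).prod (Measure.pi fun _ : Fin N => α))
      (Measure.pi fun _ : Fin (M + N) => α) :=
  (measurePreserving_piCongrLeft (fun _ => α) finSumFinEquiv).comp
    (measurePreserving_sumPiEquivProdPi_symm fun _ => α)

end MeasurableEquiv

namespace MeasureTheory

variable {Ω : Type*} [MeasurableSpace Ω]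

theorem integral_pi_mul_integral_pi_le_of_le_append (α : Measure Ω) [SigmaFinite α] {M N : ℕ}
    {f : (Fin M → Ω) → ℝ} {g : (Fin N → Ω) → ℝ} {h : (Fin (M + N) → Ω) → ℝ}
    (hf : 0 ≤ f) (hg : 0 ≤ g) (hh : Integrable h (Measure.pi fun _ => α))
    (hfgh : ∀ x y, f x * g y ≤ h (Fin.append x y)) :
    (∫ x, f x ∂Measure.pi fun _ => α) * (∫ y, g y ∂Measure.pi fun _ => α) ≤
      ∫ z, h z ∂Measure.pi fun _ => α := by
  have hT := MeasurableEquiv.measurePreserving_finAppend α M N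
  rw [← integral_prod_mul, ← hT.integral_comp']
  refine integral_mono_of_nonneg (ae_of_all _ fun p => mul_nonneg (hf _) (hg _))
    ((hT.integrable_comp_emb (MeasurableEquiv.finAppend M N).measurableEmbedding).mpr hh)
    (ae_of_all _ fun p => ?_)
  simpa [MeasurableEquiv.finAppend_apply] using hfgh p.1 p.2

noncomputable def empiricalMeasure {N : ℕ} (x : Fin N → Ω) : Measure Ω :=
  (N : ℝ≥0∞)⁻¹ • ∑ i, Measure.dirac (x i)

theorem natCast_smul_empiricalMeasure {N : ℕ} (x : Fin N → Ω) :
    (N : ℝ≥0∞) • empiricalMeasure x = ∑ i, Measure.dirac (x i) := by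
  rcases eq_or_ne N 0 with rfl | hN
  · simp
  · rw [empiricalMeasure, smul_smul,
      ENNReal.mul_inv_cancel (by exact_mod_cast hN) (ENNReal.natCast_ne_top N), one_smul]

theorem isProbabilityMeasure_empiricalMeasure {N : ℕ} (hN : N ≠ 0) (x : Fin N → Ω) :
    IsProbabilityMeasure (empiricalMeasure x) := by
  constructor
  simp [empiricalMeasure, ENNReal.inv_mul_cancel (Nat.cast_ne_zero.mpr hN)]

theorem map_empiricalMeasure {Ω' : Type*} [MeasurableSpace Ω'] {f : Ω → Ω'} (hf : Measurable f)
    {N : ℕ} (x : Fin N → Ω) :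
    (empiricalMeasure x).map f = empiricalMeasure (f ∘ x) := by
  simp [empiricalMeasure, Measure.map_smul, Measure.map_finset_sum hf.aemeasurable,
    Measure.map_dirac' hf]

theorem empiricalMeasure_append {M N : ℕ} (x : Fin M → Ω) (y : Fin N → Ω) :
    empiricalMeasure (Fin.append x y) =
      ((M : ℝ≥0∞) / (M + N)) • empiricalMeasure x +
        ((N : ℝ≥0∞) / (M + N)) • empiricalMeasure y := by
  rw [empiricalMeasure, Fin.sum_univ_add]
  simp only [Fin.append_left, Fin.append_right]
  rw [← natCast_smul_empiricalMeasure x, ← natCast_smul_empiricalMeasure y, smul_add,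
    smul_smul, smul_smul, ENNReal.div_eq_inv_mul, ENNReal.div_eq_inv_mul]
  push_cast
  rfl

theorem pi_empiricalMeasure {n N : ℕ} (hN : N ≠ 0) (x : Fin N → Ω) :
    Measure.pi (fun _ : Fin n => empiricalMeasure x) =
      (Measure.pi fun _ : Fin n => empiricalMeasure (id : Fin N → Fin N)).map (x ∘ ·) := by
  have := isProbabilityMeasure_empiricalMeasure hN (id : Fin N → Fin N)
  have := isProbabilityMeasure_empiricalMeasure hN x
  change _ = Measure.map (fun (g : Fin n → Fin N) i => x (g i)) _
  rw [Measure.pi_map_pi fun _ => (measurable_of_countable x).aemeasurable]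
  simp [map_empiricalMeasure (measurable_of_countable x)]

theorem measurable_integral_pi_empiricalMeasure {n N : ℕ} (hN : N ≠ 0)
    {φ : (Fin n → Ω) → ℝ} (hφ : Measurable φ) :
    Measurable fun x : Fin N → Ω => ∫ y, φ y ∂Measure.pi fun _ : Fin n => empiricalMeasure x := by
  have := isProbabilityMeasure_empiricalMeasure hN (id : Fin N → Fin N)
  have h_sum (x : Fin N → Ω) : ∫ y, φ y ∂Measure.pi (fun _ : Fin n => empiricalMeasure x) =
      ∑ g, (Measure.pi fun _ : Fin n => empiricalMeasure (id : Fin N → Fin N)).real {g} *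
        φ (x ∘ g) := by
    rw [pi_empiricalMeasure hN, integral_map (measurable_of_countable _).aemeasurable
      hφ.aestronglyMeasurable, integral_fintype Integrable.of_finite]
    rfl
  simp only [h_sum]
  refine Finset.measurable_sum _ fun g _ => measurable_const.mul (hφ.comp ?_)
  exact measurable_pi_lambda _ fun i => measurable_pi_apply (g i)

theorem abs_integral_pi_empiricalMeasure_le {n N : ℕ} (hN : N ≠ 0) {φ : (Fin n → Ω) → ℝ}
    {C : ℝ} (hφC : ∀ y, |φ y| ≤ C) (x : Fin N → Ω) :
    |∫ y, φ y ∂Measure.pi fun _ : Fin n => empiricalMeasure x| ≤ C := by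
  have := isProbabilityMeasure_empiricalMeasure hN x
  simpa using norm_integral_le_of_norm_le_const
    (μ := Measure.pi fun _ : Fin n => empiricalMeasure x)
    (ae_of_all _ fun y => (Real.norm_eq_abs _).trans_le (hφC y))

theorem integrable_exp_neg_mul_integral_pi_empiricalMeasure (α : Measure Ω) [IsFiniteMeasure α]
    {n N : ℕ} (hN : N ≠ 0) {φ : (Fin n → Ω) → ℝ} (hφ : Measurable φ) {C : ℝ}
    (hφC : ∀ y, |φ y| ≤ C) {c : ℝ} (hc : 0 ≤ c) :
    Integrable (fun x : Fin N → Ω =>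
      Real.exp (-(c * ∫ y, φ y ∂Measure.pi fun _ : Fin n => empiricalMeasure x)))
      (Measure.pi fun _ => α) := by
  have hmeas := ((measurable_integral_pi_empiricalMeasure (n := n) hN hφ).const_mul c).neg.exp
  refine .of_bound hmeas.aestronglyMeasurable (Real.exp (c * C)) (ae_of_all _ fun x => ?_)
  rw [Real.norm_eq_abs, abs_of_pos (Real.exp_pos _), Real.exp_le_exp]
  have hlower := (abs_le.mp (abs_integral_pi_empiricalMeasure_le hN hφC x)).1
  linarith [mul_le_mul_of_nonneg_left hlower hc]

def ConvexOnProbabilityMeasures (Φ : Measure Ω → ℝ) : Prop :=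
  ∀ μ ν : Measure Ω, IsProbabilityMeasure μ → IsProbabilityMeasure ν → ∀ t : ℝ, 0 ≤ t → t ≤ 1 →
    Φ (ENNReal.ofReal t • μ + ENNReal.ofReal (1 - t) • ν) ≤ t * Φ μ + (1 - t) * Φ ν

theorem ConvexOnProbabilityMeasures.natCast_mul_empiricalMeasure_append_le
    {Φ : Measure Ω → ℝ} (hΦ : ConvexOnProbabilityMeasures Φ) {M N : ℕ} (hM : M ≠ 0)
    (hN : N ≠ 0) (x : Fin M → Ω) (y : Fin N → Ω) :
    ((M + N : ℕ) : ℝ) * Φ (empiricalMeasure (Fin.append x y)) ≤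
      M * Φ (empiricalMeasure x) + N * Φ (empiricalMeasure y) := by
  have hMN : (0 : ℝ) < M + N := by positivity
  have h1t : 1 - (M : ℝ) / (M + N) = N / (M + N) := by field_simp; ring
  have hofReal (K : ℕ) : ENNReal.ofReal (K / (M + N)) = (K : ℝ≥0∞) / (M + N) := by
    rw [ENNReal.ofReal_div_of_pos hMN, ENNReal.ofReal_natCast,
      ENNReal.ofReal_add (Nat.cast_nonneg _) (Nat.cast_nonneg _)]
    simp
  have hconv := hΦ _ _ (isProbabilityMeasure_empiricalMeasure hM x)
    (isProbabilityMeasure_empiricalMeasure hN y) (M / (M + N)) (by positivity)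
    (div_le_one_of_le₀ (by simp) hMN.le)
  rw [h1t, hofReal, hofReal, ← empiricalMeasure_append] at hconv
  calc ((M + N : ℕ) : ℝ) * Φ (empiricalMeasure (Fin.append x y))
      ≤ (M + N) * (M / (M + N) * Φ (empiricalMeasure x) +
          N / (M + N) * Φ (empiricalMeasure y)) := by
        push_cast; gcongr
    _ = M * Φ (empiricalMeasure x) + N * Φ (empiricalMeasure y) := by
        field_simp

end MeasureTheory

theorem evp_partition_superadditive_general
    {Ω : Type*} [MeasurableSpace Ω]
    (α : Measure Ω) [IsProbabilityMeasure α] (n : ℕ)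
    (φ : (Fin n → Ω) → ℝ) (hmeas : Measurable φ) (C : ℝ) (hb : ∀ y, |φ y| ≤ C)
    (Φ : Measure Ω → ℝ)
    (hΦ : ∀ μ : Measure Ω, Φ μ = ∫ y, φ y ∂(Measure.pi fun _ : Fin n => μ))
    (hconv : ∀ μ ν : Measure Ω, IsProbabilityMeasure μ → IsProbabilityMeasure ν →
      ∀ t : ℝ, 0 ≤ t → t ≤ 1 →
        Φ (ENNReal.ofReal t • μ + ENNReal.ofReal (1 - t) • ν) ≤ t * Φ μ + (1 - t) * Φ ν)
    (Zt : ℕ → ℝ)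
    (hZ : ∀ N : ℕ, Zt N = ∫ x : Fin N → Ω,
        Real.exp (-((N : ℝ) * Φ (((N : ℝ≥0∞))⁻¹ • ∑ i : Fin N, Measure.dirac (x i))))
          ∂(Measure.pi fun _ : Fin N => α))
    (M N : ℕ) :
    Zt M * Zt N ≤ Zt (M + N) := by
  have hZ_zero : Zt 0 = 1 := by simp [hZ]
  rcases Nat.eq_zero_or_pos M with rfl | hM
  · simp [hZ_zero]
  rcases Nat.eq_zero_or_pos N with rfl | hN
  · simp [hZ_zero]
  have hZ_emp (K : ℕ) : Zt K = ∫ x : Fin K → Ω, Real.exp (-(K * Φ (empiricalMeasure x)))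
      ∂Measure.pi fun _ => α := hZ K
  rw [hZ_emp, hZ_emp, hZ_emp]
  refine integral_pi_mul_integral_pi_le_of_le_append α (fun _ => (Real.exp_pos _).le)
    (fun _ => (Real.exp_pos _).le) ?_ fun x y => ?_
  · simp only [hΦ]
    exact integrable_exp_neg_mul_integral_pi_empiricalMeasure α (by omega) hmeas hb
      (Nat.cast_nonneg _)
  · rw [← Real.exp_add, Real.exp_le_exp]
    linarith [ConvexOnProbabilityMeasures.natCast_mul_empiricalMeasure_append_le hconv
      hM.ne' hN.ne' x y]

/-- For a bounded measurable symmetric `n`-body interaction `φ` on a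
compact metric space `Ω` such that `Φ(μ) = μ^{⊗n}(φ)` is convex on probability measures,
the partition functions `Z̃(N) = ∫ exp(−N Φ(μ_x)) dα^{⊗N}(x)` (with `μ_x` the empirical
measure) satisfy `Z̃(M+N) ≥ Z̃(M)·Z̃(N)`; equivalently `N·p̃(N)` is superadditive. -/
theorem evp_partition_superadditive
    {Ω : Type*} [MetricSpace Ω] [CompactSpace Ω] [MeasurableSpace Ω] [BorelSpace Ω]
    (α : Measure Ω) [IsProbabilityMeasure α] (n : ℕ) (hn : 1 ≤ n)
    (φ : (Fin n → Ω) → ℝ) (hmeas : Measurable φ) (C : ℝ) (hb : ∀ y, |φ y| ≤ C)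
    (hsym : ∀ (σ : Equiv.Perm (Fin n)) (y : Fin n → Ω), φ (y ∘ σ) = φ y)
    (Φ : Measure Ω → ℝ)
    (hΦ : ∀ μ : Measure Ω, Φ μ = ∫ y, φ y ∂(Measure.pi fun _ : Fin n => μ))
    (hconv : ∀ μ ν : Measure Ω, IsProbabilityMeasure μ → IsProbabilityMeasure ν →
      ∀ t : ℝ, 0 ≤ t → t ≤ 1 →
        Φ (ENNReal.ofReal t • μ + ENNReal.ofReal (1 - t) • ν) ≤ t * Φ μ + (1 - t) * Φ ν)
    (Zt : ℕ → ℝ)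
    (hZ : ∀ N : ℕ, Zt N = ∫ x : Fin N → Ω,
        Real.exp (-((N : ℝ) * Φ (((N : ℝ≥0∞))⁻¹ • ∑ i : Fin N, Measure.dirac (x i))))
          ∂(Measure.pi fun _ : Fin N => α))
    (M N : ℕ) (hM : 1 ≤ M) (hN : 1 ≤ N) :
    Zt M * Zt N ≤ Zt (M + N) :=
  evp_partition_superadditive_general α n φ hmeas C hb Φ hΦ hconv Zt hZ M N
end
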